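/- arXiv:0705.4114 — 2 statements merged into one kernel-verified Lean document; each statement's English description precedes it below -/
import Mathlib

section
/- Assume the pair (m_1,…,m_n; l) is separating and h ∈ ℂ^n satisfies the constraints. Then there exists a unique monic polynomial p ∈ ℂ[x] of degree l such that deg T_h(p) ≤ n−3. (For any monic p of degree l the constraints automatically force deg T_h(p) ≤ l+n−3; the condition is that in addition the coefficients of x^{n−2},…,x^{l+n−3} of T_h(p) vanish.) -/
noncomputable section

/-- The polynomial form `T_h` of the differential operator
`d²/dx² − ∑_s m_s/(x−z_s)·d/dx + ∑_s h_s/(x−z_s)`. -/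
def Tpoly {n : ℕ} (z m h : Fin n → ℂ) (p : Polynomial ℂ) : Polynomial ℂ :=
  (∏ s, (Polynomial.X - Polynomial.C (z s))) *
      Polynomial.derivative (Polynomial.derivative p)
    - (∑ s, Polynomial.C (m s) *
        ∏ r ∈ Finset.univ.erase s, (Polynomial.X - Polynomial.C (z r))) *
      Polynomial.derivative p
    + (∑ s, Polynomial.C (h s) *
        ∏ r ∈ Finset.univ.erase s, (Polynomial.X - Polynomial.C (z r))) * p

/-- The pair (m; l) is separating. -/
def Separating {n : ℕ} (m : Fin n → ℂ) (l : ℕ) : Prop :=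
  ∀ i : ℕ, 1 ≤ i → i ≤ l → (∑ s, m s) - 2 * l + 1 + i ≠ 0

end

/-!
For `n ≥ 2` and `∑ h = 0`, `T_h` raises degrees by at most `n - 2`, and if `deg q ≤ d` the
coefficient of `x^(n-2+d)` in `T_h q` is `λ_d q_d`, where `λ_d = d(d-1) - d ∑ m + ∑ z h`.
The second constraint factors this as `λ_d = (l - d)(∑ m - 2l + 1 + (l - d))`, so `λ_l = 0`,
while separation gives `λ_d ≠ 0` for `d < l`. The conditions on `p` thus form a triangular
system with invertible diagonal: starting from `x^l`, the coefficients of `x^(n-2+d)` are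
killed for `d = l-1, …, 0` by subtracting multiples of `x^d`; and a nonzero difference of two
solutions, of degree `d < l`, would have coefficient `λ_d ≠ 0` times its leading coefficient
at `x^(n-2+d)`. For `n ≤ 1` the constraints force `l = 0`, and then `T_h 1 = 0`.
-/

open Polynomial Finset

section IterateDerivative

variable {R : Type*} [Semiring R] {u q : R[X]} {a k d : ℕ}

theorem natDegree_mul_iterate_derivative_le (hu : u.natDegree ≤ a + k) (hq : q.natDegree ≤ d) :
    (u * derivative^[k] q).natDegree ≤ a + d := by
  rcases lt_or_ge d k with hdk | hkd
  · simp [iterate_derivative_eq_zero (hq.trans_lt hdk)]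
  · refine (natDegree_mul_le_of_le hu (natDegree_iterate_derivative q k)).trans ?_
    omega

theorem coeff_mul_iterate_derivative (hu : u.natDegree ≤ a + k) (hq : q.natDegree ≤ d) :
    (u * derivative^[k] q).coeff (a + d) = u.coeff (a + k) * d.descFactorial k * q.coeff d := by
  rcases lt_or_ge d k with hdk | hkd
  · simp [iterate_derivative_eq_zero (hq.trans_lt hdk), Nat.descFactorial_eq_zero_iff_lt.mpr hdk]
  · obtain ⟨e, rfl⟩ := Nat.exists_eq_add_of_le' hkd
    have he : (derivative^[k] q).natDegree ≤ e :=
      (natDegree_iterate_derivative q k).trans (by omega)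
    rw [show a + (e + k) = a + k + e by ring, coeff_mul_add_eq_of_natDegree_le hu he,
      coeff_iterate_derivative, nsmul_eq_mul, mul_assoc]

end IterateDerivative

theorem Fintype.sum_mul_eq_zero_of_subsingleton {R ι : Type*} [NonUnitalNonAssocSemiring R]
    [Fintype ι] [Subsingleton ι] (z w : ι → R) (hw : ∑ s, w s = 0) : ∑ s, z s * w s = 0 := by
  rcases isEmpty_or_nonempty ι with _ | ⟨⟨s⟩⟩
  · simp
  · rw [Fintype.sum_subsingleton _ s] at hw ⊢
    rw [hw, mul_zero]

theorem Polynomial.Monic.degree_sub_lt_of_natDegree_eq {R : Type*} [Ring R] [Nontrivial R]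
    {p q : R[X]} {l : ℕ} (hp : p.Monic) (hq : q.Monic) (hpl : p.natDegree = l) (hql : q.natDegree = l) :
    (p - q).degree < l := by
  have hdeg : p.degree = q.degree := by
    rw [degree_eq_natDegree hp.ne_zero, degree_eq_natDegree hq.ne_zero, hpl, hql]
  simpa [degree_eq_natDegree hp.ne_zero, hpl] using
    degree_sub_lt_left hdeg hp.ne_zero (by rw [hp.leadingCoeff, hq.leadingCoeff])

section SumNumerator

variable {R ι : Type*} [CommRing R] [Fintype ι] [DecidableEq ι] (z w : ι → R)

/-- The numerator of `∑ s, w s / (X - z s)` over the common denominator `∏ s, (X - z s)`. -/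
noncomputable def sumNumerator : R[X] :=
  ∑ s, C (w s) * ∏ r ∈ univ.erase s, (X - C (z r))

theorem sumNumerator_eq_zero_of_subsingleton [Subsingleton ι] (hw : ∑ s, w s = 0) :
    sumNumerator z w = 0 := by
  have hempty (s : ι) : univ.erase s = ∅ := by
    ext r
    simp [Subsingleton.elim r s]
  simp [sumNumerator, hempty, ← map_sum, hw]

theorem coeff_sumNumerator_card_sub_two (hι : 2 ≤ Fintype.card ι) :
    (sumNumerator z w).coeff (Fintype.card ι - 2) = ∑ s, z s * w s - (∑ s, w s) * ∑ s, z s := by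
  have hnext (s : ι) :
      (∏ r ∈ univ.erase s, (X - C (z r))).coeff (Fintype.card ι - 2) = z s - ∑ r, z r := by
    have hcard : #(univ.erase s) = Fintype.card ι - 1 := by simp [card_erase_of_mem]
    rw [show Fintype.card ι - 2 = #(univ.erase s) - 1 by omega,
      prod_X_sub_C_coeff_card_pred _ _ (by omega), sum_erase_eq_sub (mem_univ s)]
    ring
  simp only [sumNumerator, finsetSum_coeff, coeff_C_mul, hnext, mul_sub, sum_sub_distrib, sum_mul]
  simp only [mul_comm]

variable [Nontrivial R]

theorem natDegree_prod_erase_X_sub_C (s : ι) :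
    (∏ r ∈ univ.erase s, (X - C (z r))).natDegree = Fintype.card ι - 1 := by
  simp [card_erase_of_mem]

theorem natDegree_sumNumerator_le : (sumNumerator z w).natDegree ≤ Fintype.card ι - 1 :=
  natDegree_sum_le_of_forall_le _ _ fun s _ =>
    (natDegree_C_mul_le _ _).trans (natDegree_prod_erase_X_sub_C z s).le

theorem coeff_sumNumerator_card_sub_one :
    (sumNumerator z w).coeff (Fintype.card ι - 1) = ∑ s, w s := by
  have hlead (s : ι) : (∏ r ∈ univ.erase s, (X - C (z r))).coeff (Fintype.card ι - 1) = 1 := by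
    rw [← natDegree_prod_erase_X_sub_C z s]
    exact (monic_prod_of_monic _ _ fun r _ => monic_X_sub_C (z r)).coeff_natDegree
  simp [sumNumerator, finsetSum_coeff, hlead]

theorem natDegree_sumNumerator_le_of_sum_eq_zero (hw : ∑ s, w s = 0) :
    (sumNumerator z w).natDegree ≤ Fintype.card ι - 2 := by
  rw [natDegree_le_iff_coeff_eq_zero]
  intro k hk
  obtain rfl | hk := (show Fintype.card ι - 1 ≤ k by omega).eq_or_lt
  · rw [coeff_sumNumerator_card_sub_one, hw]
  · exact coeff_eq_zero_of_natDegree_lt ((natDegree_sumNumerator_le z w).trans_lt hk)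

end SumNumerator

section Tpoly

variable {n : ℕ} (z m h : Fin n → ℂ)

theorem Tpoly_eq (p : ℂ[X]) :
    Tpoly z m h p = (∏ s, (X - C (z s))) * derivative^[2] p
      - sumNumerator z m * derivative^[1] p + sumNumerator z h * p :=
  rfl

theorem Tpoly_sub (p q : ℂ[X]) : Tpoly z m h (p - q) = Tpoly z m h p - Tpoly z m h q := by
  simp only [Tpoly, map_sub]
  ring

theorem Tpoly_C_mul (c : ℂ) (p : ℂ[X]) : Tpoly z m h (C c * p) = C c * Tpoly z m h p := by
  simp only [Tpoly, derivative_C_mul]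
  ring

/-- `Tpoly z m h (X ^ d) = indicial z m h d * X ^ (n - 2 + d) + (lower terms)`. -/
def indicial (d : ℕ) : ℂ :=
  d * (d - 1) - (∑ s, m s) * d + ∑ s, z s * h s

variable {z m h} (hn : 2 ≤ n) (hh : ∑ s, h s = 0) {q : ℂ[X]} {d : ℕ}
include hn hh

theorem natDegree_Tpoly_le (hq : q.natDegree ≤ d) : (Tpoly z m h q).natDegree ≤ n - 2 + d := by
  have hA : (∏ s, (X - C (z s))).natDegree ≤ n - 2 + 2 := by simp; omega
  have hB : (sumNumerator z m).natDegree ≤ n - 2 + 1 :=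
    (natDegree_sumNumerator_le z m).trans (by simp; omega)
  have hH : (sumNumerator z h).natDegree ≤ n - 2 := by
    simpa using natDegree_sumNumerator_le_of_sum_eq_zero z h hh
  rw [Tpoly_eq]
  refine (natDegree_add_le_of_le (natDegree_sub_le_of_le
    (natDegree_mul_iterate_derivative_le hA hq) (natDegree_mul_iterate_derivative_le hB hq))
    (natDegree_mul_le_of_le hH hq)).trans ?_
  simp

theorem coeff_Tpoly_of_natDegree_le (hq : q.natDegree ≤ d) :
    (Tpoly z m h q).coeff (n - 2 + d) = indicial z m h d * q.coeff d := by
  have hA : (∏ s, (X - C (z s))).natDegree ≤ n - 2 + 2 := by simp; omega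
  have hA1 : (∏ s, (X - C (z s))).coeff (n - 2 + 2) = 1 := by
    rw [show n - 2 + 2 = n by omega]
    simpa using (monic_prod_of_monic univ _ fun s _ => monic_X_sub_C (z s)).coeff_natDegree
  have hB : (sumNumerator z m).natDegree ≤ n - 2 + 1 :=
    (natDegree_sumNumerator_le z m).trans (by simp; omega)
  have hB1 : (sumNumerator z m).coeff (n - 2 + 1) = ∑ s, m s := by
    simpa [show n - 2 + 1 = n - 1 by omega] using coeff_sumNumerator_card_sub_one z m
  have hH : (sumNumerator z h).natDegree ≤ n - 2 := by
    simpa using natDegree_sumNumerator_le_of_sum_eq_zero z h hh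
  have hH1 : (sumNumerator z h).coeff (n - 2) = ∑ s, z s * h s := by
    simpa [hh] using coeff_sumNumerator_card_sub_two z h (by simpa using hn)
  rw [Tpoly_eq, coeff_add, coeff_sub, coeff_mul_iterate_derivative hA hq,
    coeff_mul_iterate_derivative hB hq, coeff_mul_add_eq_of_natDegree_le hH hq, hA1, hB1, hH1,
    Nat.cast_descFactorial_two, Nat.descFactorial_one, indicial]
  ring

end Tpoly

section Constraints

variable {n : ℕ} {z m h : Fin n → ℂ} {l : ℕ}
  (hc2 : ∑ s, z s * h s = l * ((∑ s, m s) + 1 - l))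
include hc2

theorem indicial_eq_mul (d : ℕ) :
    indicial z m h d = (l - d) * ((∑ s, m s) - 2 * l + 1 + (l - d)) := by
  rw [indicial, hc2]
  ring

theorem indicial_self : indicial z m h l = 0 := by
  simp [indicial_eq_mul hc2]

theorem indicial_ne_zero (hsep : Separating m l) {d : ℕ} (hd : d < l) : indicial z m h d ≠ 0 := by
  have hcast : ((l - d : ℕ) : ℂ) = l - d := Nat.cast_sub hd.le
  rw [indicial_eq_mul hc2, ← hcast]
  exact mul_ne_zero (Nat.cast_ne_zero.mpr (by omega)) (hsep (l - d) (by omega) (by omega))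

variable (hn : 2 ≤ n) (hh : ∑ s, h s = 0) (hsep : Separating m l)
include hn hh hsep

theorem eq_zero_of_coeff_Tpoly_eq_zero {q : ℂ[X]} (hq : q.degree < l)
    (hT : ∀ k, n - 2 ≤ k → (Tpoly z m h q).coeff k = 0) : q = 0 := by
  by_contra hq0
  have hlt : q.natDegree < l := (natDegree_lt_iff_degree_lt hq0).mpr hq
  have htop := coeff_Tpoly_of_natDegree_le (z := z) (m := m) hn hh (le_refl q.natDegree)
  rw [hT _ (by omega), coeff_natDegree] at htop
  exact mul_ne_zero (indicial_ne_zero hc2 hsep hlt) (leadingCoeff_ne_zero.mpr hq0) htop.symm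

theorem exists_monic_coeff_Tpoly_eq_zero {d : ℕ} (hd : d ≤ l) :
    ∃ p : ℂ[X], p.Monic ∧ p.natDegree = l ∧
      ∀ k, n - 2 + d ≤ k → (Tpoly z m h p).coeff k = 0 := by
  induction hd using Nat.decreasingInduction with
  | self =>
    refine ⟨X ^ l, monic_X_pow l, natDegree_X_pow l, fun k hk => ?_⟩
    obtain rfl | hk := hk.eq_or_lt
    · rw [coeff_Tpoly_of_natDegree_le hn hh (natDegree_X_pow l).le, indicial_self hc2, zero_mul]
    · exact coeff_eq_zero_of_natDegree_lt
        ((natDegree_Tpoly_le hn hh (natDegree_X_pow l).le).trans_lt hk)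
  | of_succ d hdl ih =>
    obtain ⟨p, hmon, hdeg, hT⟩ := ih
    set c := (Tpoly z m h p).coeff (n - 2 + d) / indicial z m h d
    have hXd : (X ^ d : ℂ[X]).natDegree ≤ d := natDegree_X_pow_le d
    have hlow : (C c * X ^ d).natDegree < p.natDegree :=
      (natDegree_C_mul_X_pow_le c d).trans_lt (hdeg ▸ hdl)
    refine ⟨p - C c * X ^ d, hmon.sub_of_left (degree_lt_degree hlow),
      (natDegree_sub_eq_left_of_natDegree_lt hlow).trans hdeg, fun k hk => ?_⟩
    rw [Tpoly_sub, Tpoly_C_mul, coeff_sub, coeff_C_mul]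
    obtain rfl | hk := hk.eq_or_lt
    · rw [coeff_Tpoly_of_natDegree_le hn hh hXd, coeff_X_pow_self, mul_one,
        div_mul_cancel₀ _ (indicial_ne_zero hc2 hsep hdl), sub_self]
    · rw [hT k (by omega), coeff_eq_zero_of_natDegree_lt
        ((natDegree_Tpoly_le hn hh hXd).trans_lt hk), mul_zero, sub_zero]

end Constraints

theorem statement_3_general {n : ℕ} (m : Fin n → ℂ) (l : ℕ)
    (z : Fin n → ℂ) (hsep : Separating m l)
    (h : Fin n → ℂ) (hc1 : ∑ s, h s = 0)
    (hc2 : ∑ s, z s * h s = l * ((∑ s, m s) + 1 - l)) :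
    ∃! p : Polynomial ℂ, p.Monic ∧ p.natDegree = l ∧
      ∀ k : ℕ, n - 2 ≤ k → (Tpoly z m h p).coeff k = 0 := by
  rcases le_or_gt 2 n with hn | hn
  · obtain ⟨p, hmon, hdeg, hT⟩ := exists_monic_coeff_Tpoly_eq_zero hc2 hn hc1 hsep l.zero_le
    rw [add_zero] at hT
    refine ⟨p, ⟨hmon, hdeg, hT⟩, fun q ⟨hqmon, hqdeg, hqT⟩ => sub_eq_zero.mp ?_⟩
    refine eq_zero_of_coeff_Tpoly_eq_zero hc2 hn hc1 hsep
      (hqmon.degree_sub_lt_of_natDegree_eq hmon hqdeg hdeg) fun k hk => ?_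
    rw [Tpoly_sub, coeff_sub, hqT k hk, hT k hk, sub_self]
  · have : Subsingleton (Fin n) := Fin.subsingleton_iff_le_one.mpr (by omega)
    obtain rfl : l = 0 := by
      by_contra hl
      refine indicial_ne_zero hc2 hsep (Nat.pos_of_ne_zero hl) ?_
      simp [indicial, Fintype.sum_mul_eq_zero_of_subsingleton z h hc1]
    have hH : sumNumerator z h = 0 := sumNumerator_eq_zero_of_subsingleton z h hc1
    refine ⟨1, ⟨monic_one, natDegree_one, fun k _ => by simp [Tpoly_eq, hH]⟩, ?_⟩
    rintro q ⟨hqmon, hqdeg, -⟩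
    exact hqmon.natDegree_eq_zero.mp hqdeg

theorem statement_3 {n : ℕ} (hn : 1 ≤ n) (m : Fin n → ℂ) (l : ℕ)
    (z : Fin n → ℂ) (hz : Function.Injective z) (hsep : Separating m l)
    (h : Fin n → ℂ) (hc1 : ∑ s, h s = 0)
    (hc2 : ∑ s, z s * h s = l * ((∑ s, m s) + 1 - l)) :
    ∃! p : Polynomial ℂ, p.Monic ∧ p.natDegree = l ∧
      ∀ k : ℕ, n - 2 ≤ k → (Tpoly z m h p).coeff k = 0 :=
  statement_3_general m l z hsep h hc1 hc2
end

section
/- Assume m_1,…,m_n are nonnegative integers. Let h ∈ ℂ^n, and let f,g ∈ ℂ[x] be monic polynomials of degrees l̃ and l respectively with l̃ > l ≥ 0, such that T_h(f) = 0 and T_h(g) = 0. Then l̃ + l = ∑_{s=1}^n m_s + 1, and the Wronskian satisfies f'g − fg' = (l̃ − l)·∏_{s=1}^n (x−z_s)^{m_s}. -/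
open Polynomial Finset

namespace Polynomial

section CommRing

variable {R : Type*} [CommRing R]

theorem coeff_derivative_mul_of_monic (p : R[X]) {q : R[X]} (hq : q.Monic) :
    (derivative p * q).coeff (p.natDegree + q.natDegree - 1) = p.natDegree * p.leadingCoeff := by
  rcases hk : p.natDegree with _ | k
  · simp [derivative_of_natDegree_zero hk]
  · have hdp : (derivative p).natDegree ≤ k := by
      have := natDegree_derivative_le p; omega
    rw [show k + 1 + q.natDegree - 1 = k + q.natDegree by omega,
      coeff_mul_add_eq_of_natDegree_le hdp le_rfl, hq.coeff_natDegree, mul_one, coeff_derivative,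
      leadingCoeff, hk]
    push_cast
    ring

theorem Monic.coeff_wronskian {a b : R[X]} (ha : a.Monic) (hb : b.Monic) :
    (wronskian a b).coeff (a.natDegree + b.natDegree - 1) = b.natDegree - a.natDegree := by
  rw [wronskian, coeff_sub, mul_comm a, add_comm, coeff_derivative_mul_of_monic b ha, add_comm,
    coeff_derivative_mul_of_monic a hb, ha.leadingCoeff, hb.leadingCoeff, mul_one, mul_one]

theorem mul_derivative_wronskian_eq {A B C f g : R[X]}
    (hf : A * derivative (derivative f) - B * derivative f + C * f = 0)
    (hg : A * derivative (derivative g) - B * derivative g + C * g = 0) :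
    A * derivative (wronskian f g) = B * wronskian f g := by
  simp only [wronskian, derivative_sub, derivative_mul]
  linear_combination f * hg - g * hf

theorem X_sub_C_mul_derivative_X_sub_C_pow (c : R) (k : ℕ) :
    (X - C c) * derivative ((X - C c) ^ k) = C (k : R) * (X - C c) ^ k := by
  rw [derivative_X_sub_C_pow]
  rcases k with _ | k
  · simp
  · rw [Nat.add_sub_cancel, pow_succ]
    ring

end CommRing

section CharZero

variable {K : Type*} [Field K] [CharZero K]

theorem natCast_natDegree_eq_of_mul_derivative_eq {A B Q : K[X]} (hA : A.Monic)
    (hB : B.degree < A.degree) (hQ : Q ≠ 0) (h : A * derivative Q = B * Q) :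
    (Q.natDegree : K) = B.coeff (A.natDegree - 1) := by
  rw [degree_eq_natDegree hA.ne_zero] at hB
  rcases hAd : A.natDegree with _ | d
  · have hB0 : B = 0 := by simpa [hAd] using hB
    have hQ' : derivative Q = 0 := by simpa [hB0, hA.ne_zero] using h
    simp [derivative_eq_zero.1 hQ', hB0]
  · have hBd : B.natDegree ≤ d := by
      rw [natDegree_le_iff_coeff_eq_zero]
      exact fun N hN => (degree_lt_iff_coeff_zero B _).1 (by rwa [hAd] at hB) N hN
    have hlead : (Q.natDegree : K) * Q.leadingCoeff = B.coeff d * Q.leadingCoeff := by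
      have hBQ := coeff_mul_add_eq_of_natDegree_le hBd (le_refl Q.natDegree)
      rw [← h, mul_comm] at hBQ
      rw [← coeff_derivative_mul_of_monic Q hA, hAd, show Q.natDegree + (d + 1) - 1 =
        d + Q.natDegree by omega, hBQ, leadingCoeff]
    rw [Nat.add_sub_cancel]
    exact mul_right_cancel₀ (leadingCoeff_ne_zero.2 hQ) hlead

theorem eq_of_mul_derivative_eq {A B Q₁ Q₂ : K[X]} (hA : A.Monic) (hB : B.degree < A.degree)
    (h₁ : A * derivative Q₁ = B * Q₁) (h₂ : A * derivative Q₂ = B * Q₂)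
    (hdeg : Q₁.natDegree = Q₂.natDegree) (hlc : Q₁.leadingCoeff = Q₂.leadingCoeff) :
    Q₁ = Q₂ := by
  by_contra hne
  have hQ₁ : Q₁ ≠ 0 := by
    rintro rfl
    exact hne (leadingCoeff_eq_zero.1 (hlc.symm.trans leadingCoeff_zero)).symm
  have hD : A * derivative (Q₁ - Q₂) = B * (Q₁ - Q₂) := by
    rw [derivative_sub]
    linear_combination h₁ - h₂
  have hdegD : (Q₁ - Q₂).natDegree = Q₁.natDegree := Nat.cast_injective (R := K)
    ((natCast_natDegree_eq_of_mul_derivative_eq hA hB (sub_ne_zero.2 hne) hD).trans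
      (natCast_natDegree_eq_of_mul_derivative_eq hA hB hQ₁ h₁).symm)
  have hcoeff : (Q₁ - Q₂).leadingCoeff = 0 := by
    rw [leadingCoeff, hdegD, coeff_sub, ← leadingCoeff, hdeg, ← leadingCoeff, hlc, sub_self]
  exact sub_ne_zero.2 hne (leadingCoeff_eq_zero.1 hcoeff)

end CharZero

end Polynomial

section NodePoly

variable {ι K : Type*} [Fintype ι] [CommRing K]

noncomputable def nodePoly (z : ι → K) : K[X] :=
  ∏ s, (X - C (z s))

theorem monic_nodePoly (z : ι → K) : (nodePoly z).Monic :=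
  monic_prod_X_sub_C z univ

theorem monic_prod_X_sub_C_pow (z : ι → K) (m : ι → ℕ) : (∏ s, (X - C (z s)) ^ m s).Monic :=
  monic_prod_of_monic _ _ fun s _ => (monic_X_sub_C (z s)).pow (m s)

theorem natDegree_prod_X_sub_C_pow [Nontrivial K] (z : ι → K) (m : ι → ℕ) :
    (∏ s, (X - C (z s)) ^ m s).natDegree = ∑ s, m s := by
  simp [natDegree_prod_of_monic _ _ fun s _ => (monic_X_sub_C (z s)).pow (m s),
    (monic_X_sub_C _).natDegree_pow]

variable [DecidableEq ι]

/-- The numerator of `nodePoly z * ∑ s, w s / (X - z s)`. -/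
noncomputable def residuePoly (z w : ι → K) : K[X] :=
  ∑ s, C (w s) * ∏ r ∈ univ.erase s, (X - C (z r))

theorem Tpoly_eq_nodePoly {n : ℕ} (z m h : Fin n → ℂ) (p : ℂ[X]) :
    Tpoly z m h p = nodePoly z * derivative (derivative p) - residuePoly z m * derivative p +
      residuePoly z h * p :=
  rfl

theorem nodePoly_mul_derivative_prod_pow (z : ι → K) (m : ι → ℕ) :
    nodePoly z * derivative (∏ s, (X - C (z s)) ^ m s) =
      residuePoly z (fun s => (m s : K)) * ∏ s, (X - C (z s)) ^ m s := by
  rw [derivative_prod_finset, mul_sum, residuePoly, sum_mul]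
  refine sum_congr rfl fun s _ => ?_
  rw [nodePoly, ← mul_prod_erase univ _ (mem_univ s),
    ← mul_prod_erase univ (fun r => (X - C (z r)) ^ m r) (mem_univ s)]
  linear_combination (∏ r ∈ univ.erase s, (X - C (z r))) *
    (∏ r ∈ univ.erase s, (X - C (z r)) ^ m r) * X_sub_C_mul_derivative_X_sub_C_pow (z s) (m s)

variable [Nontrivial K]

theorem degree_residuePoly_lt (z w : ι → K) : (residuePoly z w).degree < (nodePoly z).degree := by
  rw [degree_eq_natDegree (monic_nodePoly z).ne_zero, nodePoly,
    natDegree_finsetProd_X_sub_C_eq_card]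
  refine (degree_sum_le _ _).trans_lt ((Finset.sup_lt_iff (WithBot.bot_lt_coe _)).2 fun s _ => ?_)
  rw [← smul_eq_C_mul]
  refine (degree_smul_le _ _).trans_lt ?_
  rw [degree_eq_natDegree (monic_prod_X_sub_C z _).ne_zero, natDegree_finsetProd_X_sub_C_eq_card,
    Nat.cast_lt]
  exact card_erase_lt_of_mem (mem_univ s)

theorem coeff_residuePoly (z w : ι → K) :
    (residuePoly z w).coeff (Fintype.card ι - 1) = ∑ s, w s := by
  refine (finsetSum_coeff _ _ _).trans (sum_congr rfl fun s _ => ?_)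
  rw [coeff_C_mul, ← card_univ, ← card_erase_of_mem (mem_univ s),
    ← natDegree_finsetProd_X_sub_C_eq_card _ z, (monic_prod_X_sub_C z _).coeff_natDegree, mul_one]

end NodePoly

theorem statement_15_general {n : ℕ} (z : Fin n → ℂ)
    (m : Fin n → ℕ) (h : Fin n → ℂ) (lt l : ℕ) (hll : l < lt)
    (f g : Polynomial ℂ) (hf : f.Monic) (hg : g.Monic)
    (hdf : f.natDegree = lt) (hdg : g.natDegree = l)
    (hTf : Tpoly z (fun s => (m s : ℂ)) h f = 0)
    (hTg : Tpoly z (fun s => (m s : ℂ)) h g = 0) :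
    lt + l = (∑ s, m s) + 1 ∧
    Polynomial.derivative f * g - f * Polynomial.derivative g =
      Polynomial.C ((lt : ℂ) - l) * ∏ s, (Polynomial.X - Polynomial.C (z s)) ^ m s := by
  rw [Tpoly_eq_nodePoly] at hTf hTg
  have hW : derivative f * g - f * derivative g = wronskian g f := by rw [wronskian]; ring
  have hWode := mul_derivative_wronskian_eq hTg hTf
  have hWcoeff : (wronskian g f).coeff (lt + l - 1) = (lt : ℂ) - l := by
    rw [← hdf, ← hdg, add_comm, hg.coeff_wronskian hf]
  have hc : (lt : ℂ) - l ≠ 0 := sub_ne_zero.2 (by exact_mod_cast hll.ne')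
  have hW0 : wronskian g f ≠ 0 := fun h0 => hc (by rw [← hWcoeff, h0, coeff_zero])
  have hWdeg : (wronskian g f).natDegree = lt + l - 1 :=
    natDegree_eq_of_le_of_coeff_ne_zero
      (by have := natDegree_wronskian_lt_add hW0; omega) (hWcoeff ▸ hc)
  have hWsum : (wronskian g f).natDegree = ∑ s, m s := by
    have := natCast_natDegree_eq_of_mul_derivative_eq (monic_nodePoly z)
      (degree_residuePoly_lt z _) hW0 hWode
    rw [nodePoly, natDegree_finsetProd_X_sub_C_eq_card, card_univ, coeff_residuePoly] at this
    exact_mod_cast this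
  refine ⟨by omega, hW.trans ?_⟩
  refine eq_of_mul_derivative_eq (monic_nodePoly z) (degree_residuePoly_lt z _) hWode ?_ ?_ ?_
  · rw [derivative_C_mul]
    linear_combination C ((lt : ℂ) - l) * nodePoly_mul_derivative_prod_pow z m
  · rw [natDegree_C_mul hc, natDegree_prod_X_sub_C_pow, hWsum]
  · rw [leadingCoeff, hWdeg, hWcoeff, leadingCoeff_mul, leadingCoeff_C,
      (monic_prod_X_sub_C_pow z m).leadingCoeff, mul_one]

theorem statement_15 {n : ℕ} (hn : 1 ≤ n) (z : Fin n → ℂ) (hz : Function.Injective z)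
    (m : Fin n → ℕ) (h : Fin n → ℂ) (lt l : ℕ) (hll : l < lt)
    (f g : Polynomial ℂ) (hf : f.Monic) (hg : g.Monic)
    (hdf : f.natDegree = lt) (hdg : g.natDegree = l)
    (hTf : Tpoly z (fun s => (m s : ℂ)) h f = 0)
    (hTg : Tpoly z (fun s => (m s : ℂ)) h g = 0) :
    lt + l = (∑ s, m s) + 1 ∧
    Polynomial.derivative f * g - f * Polynomial.derivative g =
      Polynomial.C ((lt : ℂ) - l) * ∏ s, (Polynomial.X - Polynomial.C (z s)) ^ m s :=
  statement_15_general z m h lt l hll f g hf hg hdf hdg hTf hTg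
end
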